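/- arXiv:1302.7066 — 3 statements merged into one kernel-verified Lean document; each statement's English description precedes it below -/
import Mathlib

section
/- Let P(z) = a_0 + Σ_{ν=μ}^{n} a_ν z^ν, where 1 ≤ μ ≤ n, be a polynomial of degree n (so the coefficients of z, z², ..., z^{μ−1} all vanish) which does not vanish in |z| < k, where k ≥ 1, and let Q(z) = z^n · conj(P(1/conj(z))) be its reverse polynomial. Then for every z with |z| = 1, k^μ · |P'(z)| ≤ |Q'(z)|. -/
/-!
If every root `w` of `P` satisfies `‖u‖ ≤ ‖w‖`, then `Re (u / (u - w)) ≤ 1/2` for each of them, and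
summing over the roots gives `2 Re (u P'(u) / P(u)) ≤ n`. Hence `‖u P'(u)‖ ≤ ‖n P(u) - u P'(u)‖`,
and `n P(u) - u P'(u) ≠ 0` when `P(u) ≠ 0`; since `P` has no zeros in `‖z‖ < k`, this applies to
every `u` with `‖u‖ ≤ k`. The gap in the coefficients makes `z P'(z) = z ^ μ M(z)` for a polynomial
`M`, so the maximum modulus principle for `M / (n P - z P')` on the discs of radius `ρ < k` gives
`k ^ μ ‖M(z)‖ ≤ ‖n P(z) - z P'(z)‖`. Finally `Q'` is the reflection of the conjugate of
`n P - z P'`, whose modulus on the unit circle is that of `n P - z P'`.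
-/

open Polynomial ComplexConjugate Metric Filter Topology

namespace Polynomial

section Semiring

variable {R : Type*} [Semiring R]

theorem coeff_X_mul_derivative (P : R[X]) (m : ℕ) :
    (X * derivative P).coeff m = m * P.coeff m := by
  cases m with
  | zero => simp
  | succ m => rw [coeff_X_mul, coeff_derivative, ← Nat.cast_succ, Nat.cast_comm]

theorem X_pow_dvd_X_mul_derivative (P : R[X]) {μ : ℕ}
    (hgap : ∀ ν, 1 ≤ ν → ν < μ → P.coeff ν = 0) : X ^ μ ∣ X * derivative P := by
  refine X_pow_dvd_iff.mpr fun ν hν ↦ ?_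
  rw [coeff_X_mul_derivative]
  rcases Nat.eq_zero_or_pos ν with rfl | hν0
  · simp
  · rw [hgap ν hν0 hν, mul_zero]

end Semiring

section CommRing

variable {R : Type*} [CommRing R]

-- The polar derivative `n P(z) + (α - z) P'(z)` of `P` at `α = 0`.
noncomputable def polarDerivZero (P : R[X]) : R[X] := C (P.natDegree : R) * P - X * derivative P

theorem coeff_polarDerivZero (P : R[X]) (m : ℕ) :
    (polarDerivZero P).coeff m = (P.natDegree - m) * P.coeff m := by
  rw [polarDerivZero, coeff_sub, coeff_C_mul, coeff_X_mul_derivative]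
  ring

theorem eval_polarDerivZero (P : R[X]) (u : R) :
    (polarDerivZero P).eval u = P.natDegree * P.eval u - u * (derivative P).eval u := by
  simp [polarDerivZero]

theorem natDegree_polarDerivZero_le (P : R[X]) :
    (polarDerivZero P).natDegree ≤ P.natDegree - 1 := by
  refine natDegree_le_iff_coeff_eq_zero.mpr fun m hm ↦ ?_
  rw [coeff_polarDerivZero]
  rcases eq_or_lt_of_le (Nat.le_of_pred_lt hm) with rfl | hlt
  · simp
  · simp [coeff_eq_zero_of_natDegree_lt hlt]

theorem derivative_reflect_natDegree (P : R[X]) :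
    derivative (reflect P.natDegree P) = reflect (P.natDegree - 1) (polarDerivZero P) := by
  ext j
  rw [coeff_derivative, coeff_reflect, coeff_reflect, coeff_polarDerivZero]
  by_cases hj : j + 1 ≤ P.natDegree
  · rw [revAt_le hj, revAt_le (by omega : j ≤ P.natDegree - 1),
      show P.natDegree - (j + 1) = P.natDegree - 1 - j by omega,
      Nat.cast_sub (by omega : j ≤ P.natDegree - 1), Nat.cast_sub (by omega : 1 ≤ P.natDegree)]
    ring
  · rw [revAt_eq_self_of_lt (by omega : P.natDegree < j + 1),
      show revAt (P.natDegree - 1) j = j by rw [← revAtFun_eq, revAtFun]; split_ifs <;> omega,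
      coeff_eq_zero_of_natDegree_lt (by omega : P.natDegree < j + 1)]
    rcases eq_or_lt_of_le (by omega : P.natDegree ≤ j) with hj | hlt
    · simp [hj]
    · simp [coeff_eq_zero_of_natDegree_lt hlt]

end CommRing

theorem eval_reflect_inv_mul_pow {K : Type*} [Field K] {f : K[X]} {N : ℕ}
    (hf : f.natDegree ≤ N) {x : K} (hx : x ≠ 0) :
    (reflect N f).eval x⁻¹ * x ^ N = f.eval x := by
  let := invertibleOfNonzero hx
  simpa [invOf_eq_inv] using eval₂_reflect_mul_pow (RingHom.id K) x N f hf

theorem eval_map_conj (F : ℂ[X]) (z : ℂ) :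
    (F.map (starRingEnd ℂ)).eval z = conj (F.eval (conj z)) := by
  rw [eval_map, eval, hom_eval₂, RingHom.comp_id, Complex.conj_conj]

theorem norm_eval_reflect_conj {f : ℂ[X]} {N : ℕ} (hf : f.natDegree ≤ N) {z : ℂ}
    (hz : ‖z‖ = 1) : ‖(reflect N f).eval (conj z)‖ = ‖f.eval z‖ := by
  rw [← eval_reflect_inv_mul_pow hf (norm_ne_zero_iff.mp (hz ▸ one_ne_zero)), norm_mul, norm_pow,
    hz, one_pow, mul_one, Complex.inv_eq_conj hz]

theorem two_mul_re_eval_derivative_prod_X_sub_C_le (u : ℂ) (S : Multiset ℂ)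
    (hS : ∀ z ∈ S, ‖u‖ ≤ ‖z‖) :
    2 * (u * (derivative (S.map (X - C ·)).prod).eval u *
      conj ((S.map (X - C ·)).prod.eval u)).re ≤
      S.card * Complex.normSq ((S.map (X - C ·)).prod.eval u) := by
  induction S using Multiset.induction with
  | empty => simp
  | cons z S ih =>
    simp only [Multiset.forall_mem_cons] at hS
    set q := (S.map (X - C ·)).prod
    set a := q.eval u
    set b := (derivative q).eval u
    set w := u - z
    have hw : 2 * (u * conj w).re ≤ Complex.normSq w := by
      have hz : Complex.normSq u ≤ Complex.normSq z := by
        simpa only [← Complex.sq_norm] using pow_le_pow_left₀ (norm_nonneg u) hS.1 2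
      have : Complex.normSq w - 2 * (u * conj w).re = Complex.normSq z - Complex.normSq u := by
        simp only [w, Complex.normSq_apply, Complex.mul_re, Complex.sub_re, Complex.sub_im,
          Complex.conj_re, Complex.conj_im]
        ring
      linarith
    have hsplit : (u * (a + w * b) * (conj w * conj a)).re =
        Complex.normSq a * (u * conj w).re + Complex.normSq w * (u * b * conj a).re := by
      rw [← Complex.re_ofReal_mul, ← Complex.re_ofReal_mul, ← Complex.add_re,
        Complex.normSq_eq_conj_mul_self, Complex.normSq_eq_conj_mul_self]
      ring_nf
    simp only [Multiset.map_cons, Multiset.prod_cons, derivative_mul, derivative_sub,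
      derivative_X, derivative_C, sub_zero, one_mul, eval_add, eval_mul, eval_sub, eval_X, eval_C,
      map_mul, Multiset.card_cons]
    rw [hsplit]
    push_cast
    nlinarith [ih hS.2, Complex.normSq_nonneg a, Complex.normSq_nonneg w,
      mul_le_mul_of_nonneg_left (ih hS.2) (Complex.normSq_nonneg w)]

theorem two_mul_re_eval_derivative_le {P : ℂ[X]} {u : ℂ}
    (hroots : ∀ z ∈ P.roots, ‖u‖ ≤ ‖z‖) :
    2 * (u * (derivative P).eval u * conj (P.eval u)).re ≤
      P.natDegree * Complex.normSq (P.eval u) := by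
  have hcard : P.roots.card = P.natDegree := splits_iff_card_roots.mp (IsAlgClosed.splits P)
  have hprod := two_mul_re_eval_derivative_prod_X_sub_C_le u P.roots hroots
  rw [hcard] at hprod
  set q := (P.roots.map (X - C ·)).prod
  set c := P.leadingCoeff
  have hP : C c * q = P := C_leadingCoeff_mul_prod_multiset_X_sub_C hcard
  have he : P.eval u = c * q.eval u := by rw [← hP, eval_mul, eval_C]
  have hd : (derivative P).eval u = c * (derivative q).eval u := by
    rw [← hP, derivative_C_mul, eval_mul, eval_C]
  have hsplit : (u * (derivative P).eval u * conj (P.eval u)).re =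
      Complex.normSq c * (u * (derivative q).eval u * conj (q.eval u)).re := by
    rw [he, hd, ← Complex.re_ofReal_mul, Complex.normSq_eq_conj_mul_self, map_mul]
    ring_nf
  rw [hsplit, he, Complex.normSq_mul]
  nlinarith [mul_le_mul_of_nonneg_left hprod (Complex.normSq_nonneg c)]

theorem norm_mul_eval_derivative_le {P : ℂ[X]} {u : ℂ}
    (hroots : ∀ z ∈ P.roots, ‖u‖ ≤ ‖z‖) :
    ‖u * (derivative P).eval u‖ ≤ ‖(polarDerivZero P).eval u‖ := by
  have h := two_mul_re_eval_derivative_le hroots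
  rw [eval_polarDerivZero, ← sq_le_sq₀ (norm_nonneg _) (norm_nonneg _), Complex.sq_norm,
    Complex.sq_norm, Complex.normSq_sub]
  simp only [Complex.normSq_mul, Complex.normSq_natCast]
  have hre : (P.natDegree * P.eval u * conj (u * (derivative P).eval u)).re =
      P.natDegree * (u * (derivative P).eval u * conj (P.eval u)).re := by
    rw [← Complex.ofReal_natCast, mul_assoc, Complex.re_ofReal_mul, ← Complex.conj_re, map_mul,
      Complex.conj_conj, mul_comm (conj _), mul_comm]
  rw [hre]
  nlinarith [Complex.normSq_nonneg (P.eval u),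
    mul_le_mul_of_nonneg_left h (Nat.cast_nonneg (α := ℝ) P.natDegree)]

theorem eval_polarDerivZero_ne_zero {P : ℂ[X]} (hP : 0 < P.natDegree) {u : ℂ}
    (hroots : ∀ z ∈ P.roots, ‖u‖ ≤ ‖z‖) (hPu : P.eval u ≠ 0) :
    (polarDerivZero P).eval u ≠ 0 := by
  intro h0
  have h := two_mul_re_eval_derivative_le hroots
  rw [eval_polarDerivZero, sub_eq_zero] at h0
  rw [← h0, mul_assoc, Complex.mul_conj, ← Complex.ofReal_natCast, ← Complex.ofReal_mul,
    Complex.ofReal_re] at h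
  have : 0 < (P.natDegree : ℝ) * Complex.normSq (P.eval u) := by
    have := Complex.normSq_pos.mpr hPu
    positivity
  linarith

end Polynomial

theorem Complex.pow_mul_norm_le_one_of_forall_pow_mul_norm_le_one {f : ℂ → ℂ} {k : ℝ} {μ : ℕ}
    (hf : DifferentiableOn ℂ f (ball 0 k)) (hbound : ∀ u, ‖u‖ < k → ‖u‖ ^ μ * ‖f u‖ ≤ 1)
    {z : ℂ} (hz : ‖z‖ < k) : k ^ μ * ‖f z‖ ≤ 1 := by
  have hρ : ∀ ρ ∈ Set.Ioo ‖z‖ k, ρ ^ μ * ‖f z‖ ≤ 1 := by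
    rintro ρ ⟨hzρ, hρk⟩
    have hρ0 : 0 < ρ := (norm_nonneg z).trans_lt hzρ
    have hclosure : closure (ball (0 : ℂ) ρ) = closedBall 0 ρ := closure_ball 0 hρ0.ne'
    rw [← le_div_iff₀' (by positivity)]
    refine norm_le_of_forall_mem_frontier_norm_le (isBounded_ball (x := 0) (r := ρ)) ?_
      (fun u hu ↦ ?_) ?_
    · exact (hf.mono (hclosure ▸ closedBall_subset_ball hρk)).diffContOnCl
    · rw [frontier_ball 0 hρ0.ne', mem_sphere_zero_iff_norm] at hu
      rw [le_div_iff₀' (by positivity), ← hu]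
      exact hbound u (hu ▸ hρk)
    · exact hclosure ▸ mem_closedBall_zero_iff.mpr hzρ.le
  have hlim : Tendsto (fun ρ : ℝ ↦ ρ ^ μ * ‖f z‖) (𝓝[<] k) (𝓝 (k ^ μ * ‖f z‖)) :=
    ((continuous_pow μ).mul continuous_const).continuousWithinAt
  exact le_of_tendsto hlim (eventually_of_mem (Ioo_mem_nhdsLT hz) hρ)

theorem Complex.pow_mul_norm_le_of_forall_pow_mul_norm_le {g h : ℂ → ℂ} {k : ℝ} {μ : ℕ}
    (hg : DifferentiableOn ℂ g (ball 0 k)) (hh : DifferentiableOn ℂ h (ball 0 k))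
    (hh0 : ∀ u, ‖u‖ < k → h u ≠ 0) (hbound : ∀ u, ‖u‖ ≤ k → ‖u‖ ^ μ * ‖g u‖ ≤ ‖h u‖)
    {z : ℂ} (hz : ‖z‖ ≤ k) : k ^ μ * ‖g z‖ ≤ ‖h z‖ := by
  rcases hz.eq_or_lt with hz | hz
  · exact hz ▸ hbound z hz.le
  have hquot : ∀ u, ‖u‖ < k → ‖u‖ ^ μ * ‖(g / h) u‖ ≤ 1 := fun u hu ↦ by
    rw [Pi.div_apply, norm_div, mul_div_assoc', div_le_one (norm_pos_iff.mpr (hh0 u hu))]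
    exact hbound u hu.le
  have := pow_mul_norm_le_one_of_forall_pow_mul_norm_le_one
    (hg.div hh fun u hu ↦ hh0 u (mem_ball_zero_iff.mp hu)) hquot hz
  rwa [Pi.div_apply, norm_div, mul_div_assoc', div_le_one (norm_pos_iff.mpr (hh0 z hz))] at this

theorem stmt_11 (P Q : Polynomial ℂ) (n μ : ℕ) (k : ℝ)
    (hdeg : P.degree = n) (hμ1 : 1 ≤ μ) (hμn : μ ≤ n)
    (hgap : ∀ ν : ℕ, 1 ≤ ν → ν < μ → P.coeff ν = 0)
    (hk : 1 ≤ k)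
    (hnz : ∀ z : ℂ, ‖z‖ < k → P.eval z ≠ 0)
    (hQ : Q = (P.map (starRingEnd ℂ)).reflect n) :
    ∀ z : ℂ, ‖z‖ = 1 →
      k ^ μ * ‖(Polynomial.derivative P).eval z‖ ≤
        ‖(Polynomial.derivative Q).eval z‖ := by
  intro z hz
  have hn : P.natDegree = n := natDegree_eq_of_degree_eq_some hdeg
  have hP : P ≠ 0 := fun h ↦ by simp [h] at hdeg
  have hroots : ∀ u : ℂ, ‖u‖ ≤ k → ∀ w ∈ P.roots, ‖u‖ ≤ ‖w‖ := fun u hu w hw ↦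
    hu.trans (not_lt.mp fun hwk ↦ hnz w hwk ((mem_roots hP).mp hw))
  obtain ⟨M, hM⟩ := X_pow_dvd_X_mul_derivative P hgap
  have hMeval (u : ℂ) : ‖u‖ ^ μ * ‖M.eval u‖ = ‖u * (derivative P).eval u‖ := by
    simpa using congrArg (‖eval u ·‖) hM.symm
  have hQ' : ‖(derivative Q).eval z‖ = ‖(polarDerivZero P).eval z‖ := by
    rw [hQ, reflect_map, derivative_map, ← hn, derivative_reflect_natDegree, eval_map_conj,
      Complex.norm_conj, norm_eval_reflect_conj (natDegree_polarDerivZero_le P) hz]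
  have hcmp := Complex.pow_mul_norm_le_of_forall_pow_mul_norm_le
    M.differentiable.differentiableOn (polarDerivZero P).differentiable.differentiableOn
    (fun u hu ↦ eval_polarDerivZero_ne_zero (by omega) (hroots u hu.le) (hnz u hu))
    (fun u hu ↦ hMeval u ▸ norm_mul_eval_derivative_le (hroots u hu)) (hz ▸ hk)
  have hMz : ‖M.eval z‖ = ‖(derivative P).eval z‖ := by simpa [hz] using hMeval z
  rwa [hQ', ← hMz]
end

section
/- Let P(z) = a_n z^n + Σ_{ν=μ}^{n} a_{n−ν} z^{n−ν}, where 1 ≤ μ ≤ n, be a polynomial of degree n (so the coefficients of z^{n−1}, ..., z^{n−μ+1} all vanish) having all its zeros in |z| ≤ k, where k ≤ 1, and let Q(z) = z^n · conj(P(1/conj(z))) be its reverse polynomial. Then for every z with |z| = 1, k^μ · |P'(z)| ≥ |Q'(z)|. -/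
/-!
On the unit circle `‖P'(z)‖ = ‖n Q(z) - z Q'(z)‖`, because `n Q - X Q'` is the reversal of the
conjugate of `X P'`; likewise `X Q'` is the reversal of the conjugate of `n P - X P'`.
Where `‖w‖` bounds the moduli of all zeros `r` of `P`, `w P'(w) / P(w) = ∑ w / (w - r)` has real
part at least `n / 2`, so `‖n P(w) - w P'(w)‖ ≤ ‖w P'(w)‖`. After reversal this says
`‖t Q'(t)‖ ≤ ‖n Q(t) - t Q'(t)‖` for `‖t‖ ≤ 1 / k`, with the right side nonvanishing for
`‖t‖ < 1 / k`. The vanishing coefficients make `t Q'(t)` divisible by `t ^ μ`, and Schwarz's lemma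
for the quotient on discs of radius close to `1 / k` yields the factor `k ^ μ` at `‖t‖ = 1`.
-/

open Polynomial ComplexConjugate Metric Filter Set Topology

namespace Complex

theorem norm_ofReal_sub_le_norm {c : ℝ} {b : ℂ} (hc : 0 ≤ c) (h : c ≤ 2 * b.re) :
    ‖(c : ℂ) - b‖ ≤ ‖b‖ := by
  rw [← sq_le_sq₀ (norm_nonneg _) (norm_nonneg _), Complex.sq_norm, Complex.sq_norm,
    normSq_apply, normSq_apply]
  simp only [sub_re, sub_im, ofReal_re, ofReal_im]
  nlinarith

theorem one_le_two_mul_re_div_sub {w r : ℂ} (h : ‖r‖ ≤ ‖w‖) (hwr : w ≠ r) :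
    1 ≤ 2 * (w / (w - r)).re := by
  have hpos : 0 < normSq (w - r) := normSq_pos.mpr (sub_ne_zero.mpr hwr)
  have hsq := pow_le_pow_left₀ (norm_nonneg r) h 2
  rw [Complex.sq_norm, Complex.sq_norm, normSq_apply, normSq_apply] at hsq
  rw [div_re, ← add_div, mul_div_assoc', le_div_iff₀ hpos]
  simp only [normSq_apply, sub_re, sub_im] at hpos ⊢
  nlinarith

theorem re_multiset_sum (s : Multiset ℂ) : s.sum.re = (s.map re).sum :=
  map_multiset_sum reAddGroupHom s

end Complex

namespace Polynomial

theorem coeff_X_mul_derivative_s12 {R : Type*} [CommSemiring R] (p : R[X]) (j : ℕ) :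
    (X * derivative p).coeff j = j * p.coeff j := by
  cases j with
  | zero => simp
  | succ j => rw [coeff_X_mul, coeff_derivative]; push_cast; ring

theorem natDegree_X_mul_derivative_le {R : Type*} [CommSemiring R] (p : R[X]) :
    (X * derivative p).natDegree ≤ p.natDegree :=
  natDegree_le_iff_coeff_eq_zero.mpr fun j hj => by
    rw [coeff_X_mul_derivative_s12, coeff_eq_zero_of_natDegree_lt hj, mul_zero]

theorem X_pow_dvd_X_mul_derivative_s12 {R : Type*} [CommSemiring R] {p : R[X]} {μ : ℕ}
    (hp : ∀ j, 0 < j → j < μ → p.coeff j = 0) : X ^ μ ∣ X * derivative p := by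
  refine X_pow_dvd_iff.mpr fun j hj => ?_
  rw [coeff_X_mul_derivative_s12]
  rcases j.eq_zero_or_pos with rfl | hj0
  · simp
  · rw [hp j hj0 hj, mul_zero]

variable {R : Type*} [CommRing R] {f : R[X]} {n : ℕ}

theorem X_mul_derivative_reflect (hf : f.natDegree ≤ n) :
    X * derivative (reflect n f) = reflect n (C (n : R) * f - X * derivative f) := by
  ext j
  rw [coeff_X_mul_derivative_s12, coeff_reflect, coeff_reflect, coeff_sub, coeff_C_mul,
    coeff_X_mul_derivative_s12]
  rcases le_or_gt j n with hj | hj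
  · rw [revAt_le hj, Nat.cast_sub hj]; ring
  · rw [revAt_eq_self_of_lt hj, coeff_eq_zero_of_natDegree_lt (hf.trans_lt hj)]; ring

theorem natCast_mul_reflect_sub_X_mul_derivative (hf : f.natDegree ≤ n) :
    C (n : R) * reflect n f - X * derivative (reflect n f) = reflect n (X * derivative f) := by
  rw [X_mul_derivative_reflect hf, reflect_sub, reflect_C_mul, sub_sub_cancel]

theorem norm_eval_reflect_map_conj {g : ℂ[X]} (hg : g.natDegree ≤ n) {t : ℂ}
    (ht : t ≠ 0) :
    ‖(reflect n (g.map (starRingEnd ℂ))).eval t‖ = ‖t‖ ^ n * ‖g.eval (conj t)⁻¹‖ := by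
  let := invertibleOfNonzero (inv_ne_zero ht)
  have h := eval₂_reflect_mul_pow (RingHom.id ℂ) t⁻¹ n (g.map (starRingEnd ℂ))
    (natDegree_map_le.trans hg)
  have h_conj : eval₂ (starRingEnd ℂ) t⁻¹ g = conj (g.eval (conj t)⁻¹) := by
    rw [← eval₂_at_apply, map_inv₀, Complex.conj_conj]
  rw [invOf_eq_inv, inv_inv, eval₂_map, RingHom.id_comp, h_conj, eval₂_id] at h
  have h' := congrArg norm h
  rw [norm_mul, Complex.norm_conj, norm_pow, norm_inv] at h'
  rw [← h', mul_left_comm, ← mul_pow, mul_inv_cancel₀ (norm_ne_zero_iff.mpr ht), one_pow, mul_one]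

section RootsInDisc

variable {P : ℂ[X]} {w : ℂ}

theorem natDegree_le_two_mul_re_eval_derivative_div_eval (hPw : P.eval w ≠ 0)
    (hroots : ∀ r ∈ P.roots, ‖r‖ ≤ ‖w‖) :
    (P.natDegree : ℝ) ≤ 2 * (w * (derivative P).eval w / P.eval w).re := by
  rw [mul_div_assoc, (IsAlgClosed.splits P).eval_derivative_div_eval_of_ne_zero hPw,
    ← Multiset.sum_map_mul_left, Complex.re_multiset_sum, Multiset.map_map,
    ← Multiset.sum_map_mul_left, ← IsAlgClosed.card_roots_eq_natDegree]
  refine le_of_eq_of_le (by simp) (Multiset.card_nsmul_le_sum (a := (1 : ℝ)) fun x hx => ?_)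
  obtain ⟨r, hr, rfl⟩ := Multiset.mem_map.mp hx
  rw [Function.comp_apply, mul_one_div]
  exact Complex.one_le_two_mul_re_div_sub (hroots r hr) fun h => hPw (h ▸ isRoot_of_mem_roots hr)

theorem eval_X_mul_derivative_eq_eval_mul (hPw : P.eval w ≠ 0) :
    (X * derivative P).eval w = P.eval w * (w * (derivative P).eval w / P.eval w) := by
  rw [eval_mul, eval_X, mul_div_cancel₀ _ hPw]

theorem norm_eval_natDegree_mul_sub_le (hroots : ∀ r ∈ P.roots, ‖r‖ ≤ ‖w‖) :
    ‖(C (P.natDegree : ℂ) * P - X * derivative P).eval w‖ ≤ ‖(X * derivative P).eval w‖ := by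
  by_cases hPw : P.eval w = 0
  · simp [hPw]
  rw [eval_sub, eval_mul, eval_C, eval_X_mul_derivative_eq_eval_mul hPw,
    mul_comm (P.natDegree : ℂ), ← mul_sub, norm_mul, norm_mul]
  gcongr
  exact_mod_cast Complex.norm_ofReal_sub_le_norm (Nat.cast_nonneg _)
    (natDegree_le_two_mul_re_eval_derivative_div_eval hPw hroots)

theorem eval_X_mul_derivative_ne_zero (hP : 0 < P.natDegree)
    (hroots : ∀ r ∈ P.roots, ‖r‖ < ‖w‖) : (X * derivative P).eval w ≠ 0 := by
  have hPw : P.eval w ≠ 0 := fun h =>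
    (hroots w ((mem_roots (ne_zero_of_natDegree_gt hP)).mpr h)).false
  rw [eval_X_mul_derivative_eq_eval_mul hPw]
  refine mul_ne_zero hPw fun hB => ?_
  have := natDegree_le_two_mul_re_eval_derivative_div_eval hPw fun r hr => (hroots r hr).le
  rw [hB, Complex.zero_re, mul_zero] at this
  exact (Nat.cast_pos.mpr hP).not_ge this

end RootsInDisc

/-- Schwarz's lemma for `N / D`: maximum modulus for `N / (X ^ μ * D)` on the disc of radius `ρ`. -/
theorem norm_eval_mul_pow_le_of_X_pow_dvd {N D : ℂ[X]} {μ : ℕ} (hdvd : X ^ μ ∣ N)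
    {ρ : ℝ} (hρ : 0 < ρ) (hD : ∀ t : ℂ, ‖t‖ ≤ ρ → D.eval t ≠ 0)
    (hND : ∀ t : ℂ, ‖t‖ = ρ → ‖N.eval t‖ ≤ ‖D.eval t‖) {z : ℂ} (hz : ‖z‖ ≤ ρ) :
    ‖N.eval z‖ * ρ ^ μ ≤ ‖z‖ ^ μ * ‖D.eval z‖ := by
  obtain ⟨M, rfl⟩ := hdvd
  have hcl : closure (ball (0 : ℂ) ρ) = closedBall 0 ρ := closure_ball 0 hρ.ne'
  have hdiff : DiffContOnCl ℂ (fun t => M.eval t / D.eval t) (ball 0 ρ) :=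
    DifferentiableOn.diffContOnCl <| hcl ▸ M.differentiable.differentiableOn.div
      D.differentiable.differentiableOn fun t ht => hD t (mem_closedBall_zero_iff.mp ht)
  have hfrontier : ∀ t ∈ frontier (ball (0 : ℂ) ρ), ‖M.eval t / D.eval t‖ ≤ (ρ ^ μ)⁻¹ := by
    intro t ht
    rw [frontier_ball 0 hρ.ne', mem_sphere_zero_iff_norm] at ht
    have := hND t ht
    rw [eval_mul, eval_pow, eval_X, norm_mul, norm_pow, ht] at this
    rw [norm_div, div_le_iff₀ (norm_pos_iff.mpr (hD t ht.le)), inv_mul_eq_div,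
      le_div_iff₀ (pow_pos hρ μ), mul_comm]
    exact this
  have hmax := Complex.norm_le_of_forall_mem_frontier_norm_le isBounded_ball hdiff hfrontier
    (hcl ▸ mem_closedBall_zero_iff.mpr hz)
  rw [norm_div, div_le_iff₀ (norm_pos_iff.mpr (hD z hz)), inv_mul_eq_div,
    le_div_iff₀ (pow_pos hρ μ)] at hmax
  rw [eval_mul, eval_pow, eval_X, norm_mul, norm_pow, mul_assoc]
  gcongr

theorem norm_eval_le_pow_mul_of_X_pow_dvd_of_mul_le_one {N D : ℂ[X]} {μ : ℕ} (hdvd : X ^ μ ∣ N)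
    {k : ℝ} (hk0 : 0 ≤ k) (hk1 : k ≤ 1) (hD : ∀ t : ℂ, ‖t‖ * k < 1 → D.eval t ≠ 0)
    (hND : ∀ t : ℂ, ‖t‖ * k ≤ 1 → ‖N.eval t‖ ≤ ‖D.eval t‖) {z : ℂ} (hz : ‖z‖ ≤ 1) :
    ‖N.eval z‖ ≤ k ^ μ * ‖D.eval z‖ := by
  rcases hk1.eq_or_lt with rfl | hk1
  · simpa using hND z (by simpa using hz)
  have hε : ∀ ε ∈ Ioc k 1, ‖N.eval z‖ ≤ ε ^ μ * ‖D.eval z‖ := by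
    rintro ε ⟨hkε, hε1⟩
    have hε0 : 0 < ε := hk0.trans_lt hkε
    have hinv : ∀ t : ℂ, ‖t‖ ≤ ε⁻¹ → ‖t‖ * k < 1 := fun t ht =>
      calc ‖t‖ * k ≤ ε⁻¹ * k := by gcongr
        _ < ε⁻¹ * ε := by gcongr
        _ = 1 := inv_mul_cancel₀ hε0.ne'
    have := norm_eval_mul_pow_le_of_X_pow_dvd hdvd (inv_pos.mpr hε0)
      (fun t ht => hD t (hinv t ht)) (fun t ht => hND t (hinv t ht.le).le)
      (hz.trans ((one_le_inv₀ hε0).mpr hε1))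
    rw [inv_pow, ← div_eq_mul_inv, div_le_iff₀ (pow_pos hε0 μ)] at this
    calc ‖N.eval z‖ ≤ ‖z‖ ^ μ * ‖D.eval z‖ * ε ^ μ := this
      _ ≤ 1 * ‖D.eval z‖ * ε ^ μ := by gcongr; exact pow_le_one₀ (norm_nonneg z) hz
      _ = ε ^ μ * ‖D.eval z‖ := by ring
  have hlim : Tendsto (fun ε : ℝ => ε ^ μ * ‖D.eval z‖) (𝓝[>] k) (𝓝 (k ^ μ * ‖D.eval z‖)) :=
    (((continuous_pow μ).mul continuous_const).tendsto k).mono_left nhdsWithin_le_nhds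
  exact ge_of_tendsto hlim (eventually_of_mem (Ioc_mem_nhdsGT hk1) hε)

section Reverse

variable {P Q : ℂ[X]} {n : ℕ}

theorem X_mul_derivative_eq_reflect (hP : P.natDegree ≤ n)
    (hQ : Q = (P.map (starRingEnd ℂ)).reflect n) :
    X * derivative Q = reflect n ((C (n : ℂ) * P - X * derivative P).map (starRingEnd ℂ)) := by
  rw [hQ, X_mul_derivative_reflect (natDegree_map_le.trans hP)]
  simp [Polynomial.map_sub, derivative_map]

theorem natCast_mul_sub_X_mul_derivative_eq_reflect (hP : P.natDegree ≤ n)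
    (hQ : Q = (P.map (starRingEnd ℂ)).reflect n) :
    C (n : ℂ) * Q - X * derivative Q = reflect n ((X * derivative P).map (starRingEnd ℂ)) := by
  rw [hQ, natCast_mul_reflect_sub_X_mul_derivative (natDegree_map_le.trans hP)]
  simp [derivative_map]

theorem X_pow_dvd_X_mul_derivative_of_coeff_eq_zero {μ : ℕ} (hμn : μ ≤ n)
    (hgap : ∀ ν : ℕ, 1 ≤ ν → ν < μ → P.coeff (n - ν) = 0)
    (hQ : Q = (P.map (starRingEnd ℂ)).reflect n) : X ^ μ ∣ X * derivative Q :=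
  X_pow_dvd_X_mul_derivative_s12 fun j hj0 hjμ => by
    rw [hQ, coeff_reflect, revAt_le (by omega), coeff_map, hgap j hj0 hjμ, map_zero]

variable {k : ℝ} {t : ℂ}

theorem norm_eval_X_mul_derivative_le (hP : P.natDegree = n)
    (hQ : Q = (P.map (starRingEnd ℂ)).reflect n) (hroots : ∀ r ∈ P.roots, ‖r‖ ≤ k)
    (ht : ‖t‖ * k ≤ 1) :
    ‖(X * derivative Q).eval t‖ ≤ ‖(C (n : ℂ) * Q - X * derivative Q).eval t‖ := by
  rcases eq_or_ne t 0 with rfl | ht0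
  · simp only [eval_mul, eval_X, zero_mul, norm_zero]
    exact norm_nonneg _
  have hk : k ≤ ‖(conj t)⁻¹‖ := by
    rw [norm_inv, Complex.norm_conj, ← one_div, le_div_iff₀ (norm_pos_iff.mpr ht0), mul_comm]
    exact ht
  have hdeg : (C (n : ℂ) * P - X * derivative P).natDegree ≤ n :=
    (natDegree_sub_le _ _).trans (max_le ((natDegree_C_mul_le _ _).trans hP.le)
      ((natDegree_X_mul_derivative_le P).trans hP.le))
  rw [natCast_mul_sub_X_mul_derivative_eq_reflect hP.le hQ, X_mul_derivative_eq_reflect hP.le hQ,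
    norm_eval_reflect_map_conj hdeg ht0,
    norm_eval_reflect_map_conj ((natDegree_X_mul_derivative_le P).trans hP.le) ht0, ← hP]
  gcongr
  exact norm_eval_natDegree_mul_sub_le fun r hr => (hroots r hr).trans hk

theorem eval_natCast_mul_sub_X_mul_derivative_ne_zero (hP : P.natDegree = n) (hn : 0 < n)
    (hQ : Q = (P.map (starRingEnd ℂ)).reflect n) (hroots : ∀ r ∈ P.roots, ‖r‖ ≤ k)
    (ht : ‖t‖ * k < 1) : (C (n : ℂ) * Q - X * derivative Q).eval t ≠ 0 := by
  rw [natCast_mul_sub_X_mul_derivative_eq_reflect hP.le hQ]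
  rcases eq_or_ne t 0 with rfl | ht0
  · rw [← coeff_zero_eq_eval_zero, coeff_reflect, revAt_le (Nat.zero_le n), Nat.sub_zero,
      coeff_map, coeff_X_mul_derivative_s12, ← hP]
    exact (_root_.map_ne_zero _).mpr (mul_ne_zero (Nat.cast_ne_zero.mpr (hP ▸ hn).ne')
      (leadingCoeff_ne_zero.mpr (ne_zero_of_natDegree_gt (hP ▸ hn))))
  have hk : k < ‖(conj t)⁻¹‖ := by
    rw [norm_inv, Complex.norm_conj, ← one_div, lt_div_iff₀ (norm_pos_iff.mpr ht0), mul_comm]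
    exact ht
  rw [← norm_ne_zero_iff,
    norm_eval_reflect_map_conj ((natDegree_X_mul_derivative_le P).trans hP.le) ht0]
  exact mul_ne_zero (pow_ne_zero _ (norm_ne_zero_iff.mpr ht0)) (norm_ne_zero_iff.mpr
    (eval_X_mul_derivative_ne_zero (hP ▸ hn) fun r hr => (hroots r hr).trans_lt hk))

end Reverse

end Polynomial

theorem stmt_12 (P Q : Polynomial ℂ) (n μ : ℕ) (k : ℝ)
    (hdeg : P.degree = n) (hμ1 : 1 ≤ μ) (hμn : μ ≤ n)
    (hgap : ∀ ν : ℕ, 1 ≤ ν → ν < μ → P.coeff (n - ν) = 0)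
    (hk : k ≤ 1)
    (hzeros : ∀ z : ℂ, P.eval z = 0 → ‖z‖ ≤ k)
    (hQ : Q = (P.map (starRingEnd ℂ)).reflect n) :
    ∀ z : ℂ, ‖z‖ = 1 →
      ‖(Polynomial.derivative Q).eval z‖ ≤
        k ^ μ * ‖(Polynomial.derivative P).eval z‖ := by
  intro z hz
  have hP : P.natDegree = n := natDegree_eq_of_degree_eq_some hdeg
  have hn : 0 < n := hμ1.trans hμn
  have hroots : ∀ r ∈ P.roots, ‖r‖ ≤ k := fun r hr => hzeros r (isRoot_of_mem_roots hr)
  have hk0 : 0 ≤ k := by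
    obtain ⟨r, hr⟩ := Complex.exists_root (hdeg ▸ Nat.cast_pos.mpr hn)
    exact (norm_nonneg r).trans (hzeros r hr)
  have hQz : ‖(derivative Q).eval z‖ = ‖(X * derivative Q).eval z‖ := by
    rw [eval_mul, eval_X, norm_mul, hz, one_mul]
  have hPz : ‖(derivative P).eval z‖ = ‖(C (n : ℂ) * Q - X * derivative Q).eval z‖ := by
    rw [natCast_mul_sub_X_mul_derivative_eq_reflect hP.le hQ, norm_eval_reflect_map_conj
      ((natDegree_X_mul_derivative_le P).trans hP.le) (by rintro rfl; simp at hz),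
      ← Complex.inv_eq_conj hz, inv_inv, eval_mul, eval_X, norm_mul, hz, one_pow, one_mul, one_mul]
  rw [hQz, hPz]
  exact norm_eval_le_pow_mul_of_X_pow_dvd_of_mul_le_one
    (X_pow_dvd_X_mul_derivative_of_coeff_eq_zero hμn hgap hQ) hk0 hk
    (fun t ht => eval_natCast_mul_sub_X_mul_derivative_ne_zero hP hn hQ hroots ht)
    (fun t ht => norm_eval_X_mul_derivative_le hP hQ hroots ht) hz.le
end

section
/- Let P(z) be a polynomial of degree n with complex coefficients having all its zeros in |z| ≤ k, where k ≤ 1. Then for every complex number α with |α| ≥ k and every z with |z| = 1, one has |D_α P(z)| ≥ (|α| − k)·|P'(z)|. -/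
/-!
For `‖z‖ = 1` and `P z ≠ 0`, the logarithmic derivative gives `z P'(z) = P(z) ∑ᵣ z / (z - r)`,
the sum running over the zeros `r` of `P`. Each term `w = z / (z - r)` satisfies
`‖w - 1‖ = ‖r‖ / ‖z - r‖ ≤ k ‖w‖`, and for `0 ≤ k ≤ 1` the region `‖w - 1‖ ≤ k ‖w‖` is convex
(a disc, or a half-plane when `k = 1`). Hence the mean of the `n` terms lies in it as well, which
reads `‖n P(z) - z P'(z)‖ ≤ k ‖P'(z)‖`. Writing `D_α P = α P' + (n P - z P')` and applying the
triangle inequality gives the bound. If `P z = 0`, then `‖z‖ ≤ k` forces `k = 1` and the middle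
inequality is immediate.
-/

open Polynomial

theorem convex_setOf_norm_sub_le_mul_norm {E : Type*} [NormedAddCommGroup E]
    [InnerProductSpace ℝ E] (c : E) {k : ℝ} (hk0 : 0 ≤ k) (hk1 : k ≤ 1) :
    Convex ℝ {w : E | ‖w - c‖ ≤ k * ‖w‖} := by
  have hsq (w : E) :
      ‖w - c‖ ≤ k * ‖w‖ ↔ (1 - k ^ 2) * ‖w‖ ^ 2 - 2 * inner ℝ w c + ‖c‖ ^ 2 ≤ 0 := by
    rw [← sq_le_sq₀ (norm_nonneg _) (by positivity), norm_sub_sq_real]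
    constructor <;> intro h <;> linarith
  intro x hx y hy a b ha hb hab
  simp only [Set.mem_ofPred_eq, hsq] at hx hy ⊢
  have hnorm : ‖a • x + b • y‖ ^ 2 ≤ a * ‖x‖ ^ 2 + b * ‖y‖ ^ 2 :=
    calc ‖a • x + b • y‖ ^ 2 ≤ (a * ‖x‖ + b * ‖y‖) ^ 2 := by
          gcongr
          simpa [norm_smul, abs_of_nonneg ha, abs_of_nonneg hb] using norm_add_le (a • x) (b • y)
      _ ≤ a * ‖x‖ ^ 2 + b * ‖y‖ ^ 2 := by
          nlinarith [mul_nonneg (mul_nonneg ha hb) (sq_nonneg (‖x‖ - ‖y‖))]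
  rw [inner_add_left, real_inner_smul_left, real_inner_smul_left]
  nlinarith [mul_le_mul_of_nonneg_left hnorm (sub_nonneg.2 (pow_le_one₀ (n := 2) hk0 hk1))]

theorem Convex.inv_card_smul_sum_mem {𝕜 E : Type*} [Field 𝕜] [LinearOrder 𝕜]
    [IsStrictOrderedRing 𝕜] [AddCommGroup E] [Module 𝕜 E] {s : Set E} (hs : Convex 𝕜 s)
    {m : Multiset E} (hm : m ≠ 0) (h : ∀ x ∈ m, x ∈ s) : (m.card : 𝕜)⁻¹ • m.sum ∈ s := by
  induction m using Multiset.induction with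
  | empty => contradiction
  | cons a t ih =>
    have ha := h a (Multiset.mem_cons_self a t)
    rcases eq_or_ne t 0 with rfl | ht
    · simpa using ha
    have hmean := ih ht fun x hx => h x (Multiset.mem_cons_of_mem hx)
    have hn : (t.card : 𝕜) ≠ 0 := by simpa using ht
    have hn1 : (t.card : 𝕜) + 1 ≠ 0 := by positivity
    convert hs ha hmean (a := ((t.card : 𝕜) + 1)⁻¹) (b := t.card / (t.card + 1))
      (by positivity) (by positivity) (by field_simp; ring) using 1
    rw [Multiset.card_cons, Multiset.sum_cons, smul_smul, smul_add]
    congr 2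
    · push_cast; rfl
    · push_cast; field_simp

theorem Polynomial.eval_derivative_multiset_prod_X_sub_C {K : Type*} [Field K]
    (s : Multiset K) {z : K} (hz : ∀ r ∈ s, z ≠ r) :
    eval z (derivative (s.map fun r => X - C r).prod) =
      eval z (s.map fun r => X - C r).prod * (s.map fun r => (z - r)⁻¹).sum := by
  induction s using Multiset.induction with
  | empty => simp
  | cons a s ih =>
    have hza : z - a ≠ 0 := sub_ne_zero.2 (hz a (Multiset.mem_cons_self a s))
    simp only [Multiset.map_cons, Multiset.prod_cons, Multiset.sum_cons, derivative_mul,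
      derivative_X_sub_C, eval_add, eval_mul, eval_sub, eval_X, eval_C, one_mul,
      ih fun r hr => hz r (Multiset.mem_cons_of_mem hr)]
    field_simp

theorem Polynomial.eval_derivative_eq_mul_sum_inv_sub_roots {K : Type*} [Field K] {P : K[X]}
    (hP : P.Splits) {z : K} (hz : P.eval z ≠ 0) :
    P.derivative.eval z = P.eval z * (P.roots.map fun r => (z - r)⁻¹).sum := by
  have hroots : ∀ r ∈ P.roots, z ≠ r := by
    rintro r hr rfl
    exact hz (isRoot_of_mem_roots hr)
  have hfac := hP.eq_prod_roots
  have hPz : P.eval z = P.leadingCoeff * eval z (P.roots.map fun r => X - C r).prod := by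
    conv_lhs => rw [hfac]
    rw [eval_mul, eval_C]
  have hP'z : P.derivative.eval z =
      P.leadingCoeff * eval z (derivative (P.roots.map fun r => X - C r).prod) := by
    conv_lhs => rw [hfac]
    rw [derivative_C_mul, eval_mul, eval_C]
  rw [hP'z, hPz, eval_derivative_multiset_prod_X_sub_C _ hroots, mul_assoc]

theorem Complex.norm_multiset_sum_sub_card_le {k : ℝ} (hk : k ≤ 1) {m : Multiset ℂ}
    (hm : ∀ w ∈ m, ‖w - 1‖ ≤ k * ‖w‖) : ‖m.sum - m.card‖ ≤ k * ‖m.sum‖ := by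
  rcases m.empty_or_exists_mem with rfl | ⟨w, hw⟩
  · simp
  have hk0 : 0 ≤ k := by
    have hw0 : w ≠ 0 := by
      rintro rfl
      have h0 := hm 0 hw
      norm_num at h0
    exact nonneg_of_mul_nonneg_left ((norm_nonneg _).trans (hm w hw)) (norm_pos_iff.2 hw0)
  have hcardN : 0 < m.card := Multiset.card_pos_iff_exists_mem.2 ⟨w, hw⟩
  have hcard : (0 : ℝ) < m.card := by exact_mod_cast hcardN
  have hmean : ‖(m.card : ℝ)⁻¹ • m.sum - 1‖ ≤ k * ‖(m.card : ℝ)⁻¹ • m.sum‖ :=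
    (convex_setOf_norm_sub_le_mul_norm (1 : ℂ) hk0 hk).inv_card_smul_sum_mem
      (Multiset.card_pos.1 hcardN) hm
  have hscale : m.sum - m.card = (m.card : ℝ) • ((m.card : ℝ)⁻¹ • m.sum - 1) := by
    rw [smul_sub, smul_smul, mul_inv_cancel₀ hcard.ne', one_smul, Complex.real_smul, mul_one]
    norm_cast
  calc ‖m.sum - m.card‖ = m.card * ‖(m.card : ℝ)⁻¹ • m.sum - 1‖ := by
        rw [hscale, norm_smul, Real.norm_natCast]
    _ ≤ m.card * (k * ‖(m.card : ℝ)⁻¹ • m.sum‖) := by gcongr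
    _ = k * ‖m.sum‖ := by
        rw [norm_smul, norm_inv, Real.norm_natCast]
        field_simp

theorem Polynomial.norm_natDegree_mul_eval_sub_mul_eval_derivative_le {P : ℂ[X]} {k : ℝ}
    (hk : k ≤ 1) (hzeros : ∀ z : ℂ, P.eval z = 0 → ‖z‖ ≤ k) {z : ℂ} (hz : ‖z‖ = 1) :
    ‖P.natDegree * P.eval z - z * P.derivative.eval z‖ ≤ k * ‖P.derivative.eval z‖ := by
  by_cases hPz : P.eval z = 0
  · have hk1 : 1 ≤ k := hz ▸ hzeros z hPz
    rw [hPz, mul_zero, zero_sub, norm_neg, norm_mul, hz, one_mul]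
    exact le_mul_of_one_le_left (norm_nonneg _) hk1
  set S := (P.roots.map fun r => z * (z - r)⁻¹).sum with hSdef
  have hlog : z * P.derivative.eval z = P.eval z * S := by
    rw [eval_derivative_eq_mul_sum_inv_sub_roots (IsAlgClosed.splits P) hPz, hSdef,
      Multiset.sum_map_mul_left]
    ring
  have hS : ‖S - P.natDegree‖ ≤ k * ‖S‖ := by
    rw [← splits_iff_card_roots.1 (IsAlgClosed.splits P), ← Multiset.card_map (fun r => z * (z - r)⁻¹)]
    refine Complex.norm_multiset_sum_sub_card_le hk fun w hw => ?_
    obtain ⟨r, hr, rfl⟩ := Multiset.mem_map.1 hw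
    have hzr : z - r ≠ 0 := sub_ne_zero.2 (by rintro rfl; exact hPz (isRoot_of_mem_roots hr))
    have hshift : z * (z - r)⁻¹ - 1 = r * (z - r)⁻¹ := by field_simp; ring
    rw [hshift, norm_mul, norm_mul, hz, one_mul]
    gcongr
    exact hzeros r (isRoot_of_mem_roots hr)
  calc ‖P.natDegree * P.eval z - z * P.derivative.eval z‖ = ‖P.eval z‖ * ‖S - P.natDegree‖ := by
        rw [hlog, ← norm_mul, ← norm_neg]
        ring_nf
    _ ≤ ‖P.eval z‖ * (k * ‖S‖) := by gcongr
    _ = k * ‖P.derivative.eval z‖ := by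
        rw [← one_mul ‖P.derivative.eval z‖, ← hz, ← norm_mul, hlog, norm_mul]
        ring

theorem stmt_15_general (P : Polynomial ℂ) (n : ℕ) (k : ℝ) (α : ℂ)
    (hdeg : P.degree = n) (hk : k ≤ 1)
    (hzeros : ∀ z : ℂ, P.eval z = 0 → ‖z‖ ≤ k) :
    ∀ z : ℂ, ‖z‖ = 1 →
      (‖α‖ - k) * ‖(Polynomial.derivative P).eval z‖ ≤
        ‖(n : ℂ) * P.eval z + (α - z) * (Polynomial.derivative P).eval z‖ := by
  intro z hz
  have hkey := norm_natDegree_mul_eval_sub_mul_eval_derivative_le hk hzeros hz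
  rw [natDegree_eq_of_degree_eq_some hdeg] at hkey
  calc (‖α‖ - k) * ‖P.derivative.eval z‖
      ≤ ‖α * P.derivative.eval z‖ - ‖n * P.eval z - z * P.derivative.eval z‖ := by
        rw [norm_mul]
        linarith
    _ ≤ ‖α * P.derivative.eval z + (n * P.eval z - z * P.derivative.eval z)‖ :=
        norm_sub_le_norm_add _ _
    _ = ‖n * P.eval z + (α - z) * P.derivative.eval z‖ := by ring_nf

theorem stmt_15 (P : Polynomial ℂ) (n : ℕ) (k : ℝ) (α : ℂ)
    (hdeg : P.degree = n) (hk : k ≤ 1)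
    (hzeros : ∀ z : ℂ, P.eval z = 0 → ‖z‖ ≤ k)
    (hα : k ≤ ‖α‖) :
    ∀ z : ℂ, ‖z‖ = 1 →
      (‖α‖ - k) * ‖(Polynomial.derivative P).eval z‖ ≤
        ‖(n : ℂ) * P.eval z + (α - z) * (Polynomial.derivative P).eval z‖ :=
  stmt_15_general P n k α hdeg hk hzeros
end
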